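/- For every positive integer n, n + (n/2)·(sum over k from 1 to n-1 of 1/sin²(kπ/(2n))) + n·(sum over k from 1 to n-1 of 1/(1 + 2·sin²(kπ/(2n)))) = n³/3 - (n²/√3)·(1 - 2/(1 - (2 - √3)^(2n))). -/

import Mathlib

/-!
The numbers `cos (kπ/n)`, `0 < k < n`, are the simple roots of the Chebyshev polynomial
`U_{n-1}`, so `∑ₖ 1 / (x - cos (kπ/n)) = U_{n-1}'(x) / U_{n-1}(x)`. By the half-angle formula
the two sums of the theorem are these sums at `x = 1` and `x = 2`. At `x = 1` the value
`U_{n-1}'(1) = (n - 1) n (n + 1) / 3` gives `(n² - 1) / 3`. At `x = 2` the identity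
`(x² - 1) U_{n-1}' = n T_n - x U_{n-1}` reduces everything to `T_n(2)` and `U_{n-1}(2)`, which
are given by Binet-type formulas in `2 ± √3`, the roots of `t² - 4t + 1`.
-/

open Polynomial Polynomial.Chebyshev Real Finset

theorem two_add_sqrt_three_mul_two_sub_sqrt_three : (2 + √3) * (2 - √3) = 1 := by
  ring_nf
  norm_num

theorem two_sub_sqrt_three_pos : 0 < 2 - √3 := by
  have : √3 < 2 := (sqrt_lt' (by norm_num)).mpr (by norm_num)
  linarith

theorem two_sub_sqrt_three_lt_one : 2 - √3 < 1 := by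
  have : 1 < √3 := (lt_sqrt (by norm_num)).mpr (by norm_num)
  linarith

theorem one_sub_two_sub_sqrt_three_pow_ne_zero {k : ℕ} (hk : k ≠ 0) : 1 - (2 - √3) ^ k ≠ 0 :=
  sub_ne_zero.mpr (pow_lt_one₀ two_sub_sqrt_three_pos.le two_sub_sqrt_three_lt_one hk).ne'

namespace Polynomial.Chebyshev

section Binet

variable {R : Type*} [CommRing R]

theorem two_mul_T_eval_eq_pow_add_pow {q r x : R} (hqr : q * r = 1) (hx : q + r = 2 * x)
    (n : ℕ) : 2 * (T R n).eval x = q ^ n + r ^ n := by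
  rw [← dickson_one_one_eval_add_inv q r hqr n, dickson_one_one_eq_chebyshev_C, hx]
  simpa using (congrArg (eval x) (C_comp_two_mul_X R n)).symm

theorem U_eval_mul_sub_eq_pow_sub_pow {q r x : R} (hqr : q * r = 1) (hx : q + r = 2 * x)
    (n : ℕ) : (U R n).eval x * (q - r) = q ^ (n + 1) - r ^ (n + 1) := by
  induction n using Nat.twoStepInduction with
  | zero => simp
  | one => simp [U_one]; linear_combination (r - q) * hx
  | more n ih₁ ih₂ =>
    push_cast at ih₂ ⊢
    rw [U_add_two, eval_sub, eval_mul, eval_mul, eval_X, eval_ofNat]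
    linear_combination 2 * x * ih₂ - ih₁ - (q ^ (n + 2) - r ^ (n + 2)) * hx
      + (q ^ (n + 1) - r ^ (n + 1)) * hqr

end Binet

theorem injOn_cos_roots_U_real (n : ℕ) :
    Set.InjOn (fun k : ℕ ↦ cos ((k + 1) * π / (n + 1))) (range n) :=
  (range n).nodup_map_iff_injOn.mp (roots_U_real_nodup n)

theorem splits_U_real (n : ℕ) : (U ℝ n).Splits := by
  rw [splits_iff_card_roots, roots_U_real, natDegree_U_natCast, card_val,
    card_image_of_injOn (injOn_cos_roots_U_real n), card_range]

theorem sum_one_div_sub_cos_eq_derivative_U_div_U (n : ℕ) {x : ℝ} (hx : (U ℝ n).eval x ≠ 0) :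
    ∑ k ∈ range n, 1 / (x - cos ((k + 1) * π / (n + 1))) =
      (derivative (U ℝ n)).eval x / (U ℝ n).eval x := by
  rw [(splits_U_real n).eval_derivative_div_eval_of_ne_zero hx, roots_U_real,
    ← sum_eq_multiset_sum, sum_image (injOn_cos_roots_U_real n)]

theorem sum_one_div_one_sub_cos (n : ℕ) :
    ∑ k ∈ range n, 1 / (1 - cos ((k + 1) * π / (n + 1))) = n * (n + 2) / 3 := by
  have hU : (U ℝ n).eval 1 = n + 1 := by simp
  rw [sum_one_div_sub_cos_eq_derivative_U_div_U n (by rw [hU]; positivity), hU,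
    derivative_U_eval_one_eq_div]
  push_cast
  field_simp

theorem sum_one_div_sub_cos_eq_T_div_U (n : ℕ) {x : ℝ} (hx : (U ℝ n).eval x ≠ 0)
    (hx₁ : x ^ 2 ≠ 1) :
    ∑ k ∈ range n, 1 / (x - cos ((k + 1) * π / (n + 1))) =
      ((n + 1) * ((T ℝ (n + 1)).eval x / (U ℝ n).eval x) - x) / (x ^ 2 - 1) := by
  have h := congrArg (eval x) (add_one_mul_T_eq_poly_in_U (R := ℝ) n)
  simp only [eval_mul, eval_sub, eval_add, eval_pow, eval_X, eval_one, Int.cast_natCast,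
    eval_natCast] at h
  rw [sum_one_div_sub_cos_eq_derivative_U_div_U n hx]
  have : x ^ 2 - 1 ≠ 0 := sub_ne_zero.mpr hx₁
  field_simp
  linear_combination -h

theorem two_mul_T_eval_two (n : ℕ) : 2 * (T ℝ n).eval 2 = (2 + √3) ^ n + (2 - √3) ^ n :=
  two_mul_T_eval_eq_pow_add_pow two_add_sqrt_three_mul_two_sub_sqrt_three (by ring) n

theorem U_eval_two_mul_two_mul_sqrt_three (n : ℕ) :
    (U ℝ n).eval 2 * (2 * √3) = (2 + √3) ^ (n + 1) - (2 - √3) ^ (n + 1) := by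
  rw [← U_eval_mul_sub_eq_pow_sub_pow (x := 2) two_add_sqrt_three_mul_two_sub_sqrt_three
    (by ring)]
  ring

theorem U_eval_two_pos (n : ℕ) : 0 < (U ℝ n).eval 2 := by
  have hlt : (2 - √3) ^ (n + 1) < (2 + √3) ^ (n + 1) :=
    pow_lt_pow_left₀ (by linarith [sqrt_nonneg 3, two_sub_sqrt_three_lt_one])
      two_sub_sqrt_three_pos.le n.succ_ne_zero
  have := U_eval_two_mul_two_mul_sqrt_three n
  nlinarith [sqrt_pos.mpr (show (0 : ℝ) < 3 by norm_num)]

theorem T_eval_two_div_U_eval_two (n : ℕ) :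
    (T ℝ (n + 1)).eval 2 / (U ℝ n).eval 2 =
      √3 * (1 + (2 - √3) ^ (2 * (n + 1))) / (1 - (2 - √3) ^ (2 * (n + 1))) := by
  have hT := two_mul_T_eval_two (n + 1)
  have hU := U_eval_two_mul_two_mul_sqrt_three n
  have hqr : (2 + √3) ^ (n + 1) * (2 - √3) ^ (n + 1) = 1 := by
    rw [← mul_pow, two_add_sqrt_three_mul_two_sub_sqrt_three, one_pow]
  rw [div_eq_div_iff (U_eval_two_pos n).ne' (one_sub_two_sub_sqrt_three_pow_ne_zero (by omega))]
  push_cast at hT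
  rw [mul_comm 2 (n + 1), pow_mul]
  linear_combination (√3 * (U ℝ n).eval 2 - (T ℝ (n + 1)).eval 2) * hqr
    - (T ℝ (n + 1)).eval 2 * (2 - √3) ^ (n + 1) * hU
    + √3 * (U ℝ n).eval 2 * (2 - √3) ^ (n + 1) * hT

end Polynomial.Chebyshev

theorem sum_Ico_sin_sq_eq_sum_range_cos (m : ℕ) (g : ℝ → ℝ) :
    ∑ k ∈ Ico 1 (m + 1), g (sin (k * π / (2 * (m + 1))) ^ 2) =
      ∑ k ∈ range m, g ((1 - cos ((k + 1) * π / (m + 1))) / 2) := by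
  rw [sum_Ico_eq_sum_range, Nat.add_sub_cancel]
  refine sum_congr rfl fun k _ ↦ congrArg g ?_
  have hθ : 2 * (((1 + k : ℕ) : ℝ) * π / (2 * (m + 1))) = (k + 1) * π / (m + 1) := by
    push_cast
    field_simp
    ring
  rw [sin_sq_eq_half_sub, hθ]
  ring

theorem eigenvalue_sum_kirchhoff_general (n : ℕ) :
    (n : ℝ) + ((n : ℝ) / 2) * ∑ k ∈ Finset.Ico 1 n, 1 / Real.sin ((k : ℝ) * π / (2 * n)) ^ 2
        + (n : ℝ) * ∑ k ∈ Finset.Ico 1 n, 1 / (1 + 2 * Real.sin ((k : ℝ) * π / (2 * n)) ^ 2)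
      = (n : ℝ) ^ 3 / 3 - ((n : ℝ) ^ 2 / Real.sqrt 3) *
          (1 - 2 / (1 - (2 - Real.sqrt 3) ^ (2 * n))) := by
  rcases n with _ | m
  · simp
  push_cast
  have h₁ : ∑ k ∈ Ico 1 (m + 1), 1 / sin (k * π / (2 * (m + 1))) ^ 2 =
      2 * ∑ k ∈ range m, 1 / (1 - cos ((k + 1) * π / (m + 1))) := by
    rw [sum_Ico_sin_sq_eq_sum_range_cos m (fun s ↦ 1 / s), mul_sum]
    simp only [one_div_div, mul_one_div]
  have h₂ : ∑ k ∈ Ico 1 (m + 1), 1 / (1 + 2 * sin (k * π / (2 * (m + 1))) ^ 2) =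
      ∑ k ∈ range m, 1 / (2 - cos ((k + 1) * π / (m + 1))) := by
    rw [sum_Ico_sin_sq_eq_sum_range_cos m (fun s ↦ 1 / (1 + 2 * s))]
    exact sum_congr rfl fun k _ ↦ by ring
  rw [h₁, h₂, sum_one_div_one_sub_cos,
    sum_one_div_sub_cos_eq_T_div_U m (U_eval_two_pos m).ne' (by norm_num),
    T_eval_two_div_U_eval_two]
  have hE := one_sub_two_sub_sqrt_three_pow_ne_zero (k := 2 * (m + 1)) (by omega)
  have h3 : √3 ^ 2 = 3 := sq_sqrt (by norm_num)
  generalize (2 - √3) ^ (2 * (m + 1)) = E at hE ⊢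
  field_simp
  linear_combination 3 * (m + 1) * (1 + E) * h3

theorem eigenvalue_sum_kirchhoff (n : ℕ) (hn : 0 < n) :
    (n : ℝ) + ((n : ℝ) / 2) * ∑ k ∈ Finset.Ico 1 n, 1 / Real.sin ((k : ℝ) * π / (2 * n)) ^ 2
        + (n : ℝ) * ∑ k ∈ Finset.Ico 1 n, 1 / (1 + 2 * Real.sin ((k : ℝ) * π / (2 * n)) ^ 2)
      = (n : ℝ) ^ 3 / 3 - ((n : ℝ) ^ 2 / Real.sqrt 3) *
          (1 - 2 / (1 - (2 - Real.sqrt 3) ^ (2 * n))) :=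
  eigenvalue_sum_kirchhoff_general n
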